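/- arXiv:2202.13619 — 2 statements merged into one kernel-verified Lean document; each statement's English description precedes it below -/
import Mathlib

section
/- Let Γ be a group, (Λ_N)_{N∈ℕ} an increasing (nested) exhaustion of Γ by subgroups with Γ = ⋃_N Λ_N, and A ≥ 1 an integer. Suppose that for every N, the set 𝒜_N of subgroups of Λ_N of index at most A is finite and nonempty, and that whenever N < N' and H ∈ 𝒜_{N'} one has H ∩ Λ_N ∈ 𝒜_N. If moreover each 𝒜_N contains an abelian subgroup, then Γ contains an abelian subgroup of index at most A. -/
section Stmt9Aux

variable {Γ : Type*} [Group Γ] (Λ : ℕ → Subgroup Γ) (A : ℕ)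

/-- Membership in `𝒜_N` together with abelianness. -/
def Stmt9.Good (N : ℕ) (H : Subgroup Γ) : Prop :=
  (H ≤ Λ N ∧ 0 < H.relIndex (Λ N) ∧ H.relIndex (Λ N) ≤ A) ∧
    ∀ x ∈ H, ∀ y ∈ H, x * y = y * x

/-- `H` is an (abelian) element of `𝒜_N` extendable to all higher levels. -/
def Stmt9.Ext (N : ℕ) (H : Subgroup Γ) : Prop :=
  ∀ M : ℕ, ∃ K : Subgroup Γ, Stmt9.Good Λ A (M + N) K ∧ K ⊓ Λ N = H

variable {Λ A}

lemma Stmt9.infinite_exists_le {s : Set ℕ} (hs : s.Infinite) (M : ℕ) :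
    ∃ n ∈ s, M ≤ n := by
  by_contra h
  push_neg at h
  exact hs (Set.Finite.subset (Set.finite_Iio M) fun n hn => h n hn)

variable (hmono : Monotone Λ)
  (hcompat : ∀ N N' (H : Subgroup Γ), N < N' →
      (H ≤ Λ N' ∧ 0 < H.relIndex (Λ N') ∧ H.relIndex (Λ N') ≤ A) →
      (H ⊓ Λ N ≤ Λ N ∧ 0 < (H ⊓ Λ N).relIndex (Λ N) ∧
        (H ⊓ Λ N).relIndex (Λ N) ≤ A))

include hcompat in
/-- Restriction of a good subgroup to a lower level is good. -/
lemma Stmt9.good_restrict {N N' : ℕ} (hNN' : N ≤ N') {K : Subgroup Γ}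
    (hK : Stmt9.Good Λ A N' K) : Stmt9.Good Λ A N (K ⊓ Λ N) := by
  rcases eq_or_lt_of_le hNN' with rfl | hlt
  · rwa [inf_eq_left.mpr hK.1.1]
  · exact ⟨hcompat N N' K hlt hK.1,
      fun x hx y hy => hK.2 x (Subgroup.mem_inf.mp hx).1 y (Subgroup.mem_inf.mp hy).1⟩

include hmono hcompat in
/-- If `H` arises as a restriction of good subgroups at unboundedly many levels,
then it arises at every level at least `N`. -/
lemma Stmt9.ext_of_unbounded {N : ℕ} {H : Subgroup Γ}
    (h : ∀ M : ℕ, ∃ M' ≥ M, ∃ K : Subgroup Γ, Stmt9.Good Λ A M' K ∧ K ⊓ Λ N = H) :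
    Stmt9.Ext Λ A N H := by
  intro M
  obtain ⟨M', hM', K, hK, hKH⟩ := h (M + N)
  refine ⟨K ⊓ Λ (M + N), Stmt9.good_restrict hcompat hM' hK, ?_⟩
  rw [inf_assoc, inf_eq_right.mpr (hmono (Nat.le_add_left N M)), hKH]

include hmono hcompat in
/-- Pigeonhole step: from a family of good subgroups at unbounded levels, there is an
extendable subgroup at level `n` which is the restriction of one member of the family. -/
lemma Stmt9.exists_ext
    (hfin : ∀ N, {H : Subgroup Γ | H ≤ Λ N ∧ 0 < H.relIndex (Λ N) ∧
        H.relIndex (Λ N) ≤ A}.Finite)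
    {n : ℕ} (K : ℕ → Subgroup Γ) (lev : ℕ → ℕ) (hlev : ∀ M, M ≤ lev M)
    (hlevn : ∀ M, n ≤ lev M)
    (hgood : ∀ M, Stmt9.Good Λ A (lev M) (K M)) :
    ∃ H : Subgroup Γ, Stmt9.Ext Λ A n H ∧ ∃ M : ℕ, K M ⊓ Λ n = H := by
  have hfin' : Finite {H : Subgroup Γ // Stmt9.Good Λ A n H} := by
    have : {H : Subgroup Γ | Stmt9.Good Λ A n H} ⊆
        {H : Subgroup Γ | H ≤ Λ n ∧ 0 < H.relIndex (Λ n) ∧ H.relIndex (Λ n) ≤ A} :=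
      fun H hH => hH.1
    exact ((hfin n).subset this).to_subtype
  let f : ℕ → {H : Subgroup Γ // Stmt9.Good Λ A n H} :=
    fun M => ⟨K M ⊓ Λ n, Stmt9.good_restrict hcompat (hlevn M) (hgood M)⟩
  obtain ⟨⟨H, hH⟩, hfib⟩ := Finite.exists_infinite_fiber f
  have hfib' : (f ⁻¹' {⟨H, hH⟩}).Infinite := Set.infinite_coe_iff.mp hfib
  have hval : ∀ M ∈ f ⁻¹' {⟨H, hH⟩}, K M ⊓ Λ n = H := by
    intro M hM
    have : f M = ⟨H, hH⟩ := hM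
    exact congrArg Subtype.val this
  obtain ⟨M₀, hM₀mem, _⟩ := Stmt9.infinite_exists_le hfib' 0
  refine ⟨H, Stmt9.ext_of_unbounded hmono hcompat fun M => ?_, M₀, hval M₀ hM₀mem⟩
  obtain ⟨M', hM'mem, hM'ge⟩ := Stmt9.infinite_exists_le hfib' M
  exact ⟨lev M', le_trans hM'ge (hlev M'), K M', hgood M', hval M' hM'mem⟩

include hmono in
lemma Stmt9.ext_good {N : ℕ} {H : Subgroup Γ} (h : Stmt9.Ext Λ A N H) :
    Stmt9.Good Λ A N H := by
  obtain ⟨K, hK, hKH⟩ := h 0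
  rw [Nat.zero_add] at hK
  rw [inf_eq_left.mpr hK.1.1] at hKH
  exact hKH ▸ hK

end Stmt9Aux

/-- König-type argument: if `Γ` is exhausted by an increasing chain of subgroups `Λ_N`,
the sets `𝒜_N` of subgroups of `Λ_N` of index at most `A` are finite, nonempty,
compatible under intersection, and each contains an abelian member, then `Γ` has an
abelian subgroup of index at most `A`. -/
theorem stmt_9 {Γ : Type*} [Group Γ] (Λ : ℕ → Subgroup Γ) (hmono : Monotone Λ)
    (hexh : ∀ g : Γ, ∃ N, g ∈ Λ N) (A : ℕ) (hA : 1 ≤ A)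
    (hfin : ∀ N, {H : Subgroup Γ | H ≤ Λ N ∧ 0 < H.relIndex (Λ N) ∧
        H.relIndex (Λ N) ≤ A}.Finite)
    (hne : ∀ N, ∃ H : Subgroup Γ, H ≤ Λ N ∧ 0 < H.relIndex (Λ N) ∧
        H.relIndex (Λ N) ≤ A)
    (hcompat : ∀ N N' (H : Subgroup Γ), N < N' →
        (H ≤ Λ N' ∧ 0 < H.relIndex (Λ N') ∧ H.relIndex (Λ N') ≤ A) →
        (H ⊓ Λ N ≤ Λ N ∧ 0 < (H ⊓ Λ N).relIndex (Λ N) ∧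
          (H ⊓ Λ N).relIndex (Λ N) ≤ A))
    (habel : ∀ N, ∃ H : Subgroup Γ,
        (H ≤ Λ N ∧ 0 < H.relIndex (Λ N) ∧ H.relIndex (Λ N) ≤ A) ∧
        ∀ x ∈ H, ∀ y ∈ H, x * y = y * x) :
    ∃ H : Subgroup Γ, (∀ x ∈ H, ∀ y ∈ H, x * y = y * x) ∧
      0 < H.index ∧ H.index ≤ A := by
  classical
  -- base of the König construction
  have base : ∃ H : Subgroup Γ, Stmt9.Ext Λ A 0 H := by
    choose K hK using habel
    obtain ⟨H, hH, -⟩ := Stmt9.exists_ext hmono hcompat hfin K id (fun M => le_rfl)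
      (fun M => Nat.zero_le _) hK
    exact ⟨H, hH⟩
  -- inductive step
  have step : ∀ N (H : Subgroup Γ), Stmt9.Ext Λ A N H →
      ∃ H' : Subgroup Γ, Stmt9.Ext Λ A (N + 1) H' ∧ H' ⊓ Λ N = H := by
    intro N H hH
    choose K hK hKH using hH
    obtain ⟨H', hH', M₀, hM₀⟩ := Stmt9.exists_ext hmono hcompat hfin
      (fun M => K (M + 1)) (fun M => M + 1 + N)
      (fun M => by show M ≤ M + 1 + N; omega) (fun M => by show N + 1 ≤ M + 1 + N; omega)
      (fun M => hK (M + 1))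
    refine ⟨H', hH', ?_⟩
    rw [← hM₀, inf_assoc, inf_eq_right.mpr (hmono (by omega : N ≤ N + 1)), hKH (M₀ + 1)]
  obtain ⟨H0, hH0⟩ := base
  choose F hF1 hF2 using step
  -- the compatible chain
  let seq : ∀ N : ℕ, {H : Subgroup Γ // Stmt9.Ext Λ A N H} :=
    fun N => Nat.rec ⟨H0, hH0⟩ (fun n p => ⟨F n p.1 p.2, hF1 n p.1 p.2⟩) N
  have hseq : ∀ N, (seq (N + 1)).1 ⊓ Λ N = (seq N).1 :=
    fun N => hF2 N (seq N).1 (seq N).2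
  have hgood : ∀ N, Stmt9.Good Λ A N (seq N).1 :=
    fun N => Stmt9.ext_good hmono (seq N).2
  have hseqmono : Monotone fun N => (seq N).1 := by
    apply monotone_nat_of_le_succ
    intro N
    rw [← hseq N]
    exact inf_le_left
  have hcap : ∀ N M, N ≤ M → (seq M).1 ⊓ Λ N = (seq N).1 := by
    intro N M hNM
    induction M, hNM using Nat.le_induction with
    | base => exact inf_eq_left.mpr (hgood N).1.1
    | succ M hNM ih =>
      calc (seq (M + 1)).1 ⊓ Λ N = (seq (M + 1)).1 ⊓ (Λ M ⊓ Λ N) := by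
            rw [inf_eq_right.mpr (hmono hNM)]
        _ = ((seq (M + 1)).1 ⊓ Λ M) ⊓ Λ N := (inf_assoc _ _ _).symm
        _ = (seq M).1 ⊓ Λ N := by rw [hseq M]
        _ = (seq N).1 := ih
  -- the limit subgroup
  set Hf : Subgroup Γ := ⨆ N, (seq N).1 with hHf
  have hmem : ∀ x : Γ, x ∈ Hf ↔ ∃ N, x ∈ (seq N).1 := fun x =>
    Subgroup.mem_iSup_of_directed (hseqmono.directed_le)
  have hHfcap : ∀ N, Hf ⊓ Λ N = (seq N).1 := by
    intro N
    refine le_antisymm ?_ (le_inf (le_iSup (fun N => (seq N).1) N) (hgood N).1.1)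
    rintro x ⟨hx1, hx2⟩
    obtain ⟨M, hM⟩ := (hmem x).mp hx1
    have hx' : x ∈ (seq (max M N)).1 := hseqmono (le_max_left M N) hM
    have : x ∈ (seq (max M N)).1 ⊓ Λ N := ⟨hx', hx2⟩
    rwa [hcap N (max M N) (le_max_right M N)] at this
  have hrel : ∀ N, 0 < Hf.relIndex (Λ N) ∧ Hf.relIndex (Λ N) ≤ A := by
    intro N
    have := (hgood N).1.2
    rwa [← hHfcap N, Subgroup.inf_relIndex_right] at this
  -- abelian
  have habH : ∀ x ∈ Hf, ∀ y ∈ Hf, x * y = y * x := by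
    intro x hx y hy
    obtain ⟨Nx, hNx⟩ := (hmem x).mp hx
    obtain ⟨Ny, hNy⟩ := (hmem y).mp hy
    exact (hgood (max Nx Ny)).2 x (hseqmono (le_max_left Nx Ny) hNx) y
      (hseqmono (le_max_right Nx Ny) hNy)
  -- no injection of `Fin (A+1)` into the quotient
  have key : ∀ f : Fin (A + 1) → Γ ⧸ Hf, ¬ Function.Injective f := by
    intro f hf
    choose g hg using fun i => QuotientGroup.mk_surjective (f i)
    choose Ni hNi using fun i => hexh (g i)
    set N := Finset.univ.sup Ni with hN
    have hgN : ∀ i, g i ∈ Λ N :=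
      fun i => hmono (Finset.le_sup (Finset.mem_univ i)) (hNi i)
    have hidx : (Hf.subgroupOf (Λ N)).index = Hf.relIndex (Λ N) := rfl
    have hQfin : Finite (Λ N ⧸ Hf.subgroupOf (Λ N)) := by
      apply Nat.finite_of_card_ne_zero
      rw [← Subgroup.index, hidx]
      exact (hrel N).1.ne'
    let f' : Fin (A + 1) → Λ N ⧸ Hf.subgroupOf (Λ N) :=
      fun i => QuotientGroup.mk ⟨g i, hgN i⟩
    have hf' : Function.Injective f' := by
      intro i j hij
      apply hf
      rw [← hg i, ← hg j]
      rw [QuotientGroup.eq] at hij ⊢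
      simpa [Subgroup.mem_subgroupOf] using hij
    have hle := Nat.card_le_card_of_injective f' hf'
    rw [Nat.card_eq_fintype_card, Fintype.card_fin] at hle
    have : Nat.card (Λ N ⧸ Hf.subgroupOf (Λ N)) = Hf.relIndex (Λ N) := by
      rw [← Subgroup.index, hidx]
    rw [this] at hle
    have := (hrel N).2
    omega
  -- finiteness of the quotient
  have hQfin : Finite (Γ ⧸ Hf) := by
    by_contra h
    rw [not_finite_iff_infinite] at h
    have e := Infinite.natEmbedding (Γ ⧸ Hf)
    exact key (fun i => e i) (e.injective.comp Fin.val_injective)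
  have hpos : 0 < Hf.index := by
    rw [Subgroup.index]
    exact Nat.card_pos
  have hleA : Hf.index ≤ A := by
    by_contra h
    push_neg at h
    have := Fintype.ofFinite (Γ ⧸ Hf)
    rw [Subgroup.index, Nat.card_eq_fintype_card] at h
    have hcard : Fintype.card (Fin (A + 1)) ≤ Fintype.card (Γ ⧸ Hf) := by
      rw [Fintype.card_fin]; omega
    obtain ⟨f⟩ := Function.Embedding.nonempty_of_card_le hcard
    exact key f f.injective
  exact ⟨Hf, habH, hpos, hleA⟩
end

section
/- Let X be a metric space, M ⊆ X, and suppose for each x ∈ M a radius ε_x ∈ (0, 1] is given satisfying: for all x, y ∈ M, if d(x,y) ≤ ε_x/4 then ε_y ≥ ε_x/2. Let S ⊆ M be a maximal subset with the property that d(p,q) > max(ε_p, ε_q)/36 for all distinct p, q ∈ S. Then for every x ∈ M there exists p ∈ S with d(x, p) < ε_p/6. -/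
/-- A maximal `ε/36`-separated subset `S` of `M` (with `ε` varying slowly) is
`ε/6`-covering: every `x ∈ M` lies in some ball `B(p, ε_p/6)` with `p ∈ S`. -/
theorem stmt_10 {X : Type*} [MetricSpace X] (M : Set X) (ε : X → ℝ)
    (hpos : ∀ x ∈ M, 0 < ε x ∧ ε x ≤ 1)
    (hslow : ∀ x ∈ M, ∀ y ∈ M, dist x y ≤ ε x / 4 → ε x / 2 ≤ ε y)
    (S : Set X) (hSM : S ⊆ M)
    (hsep : ∀ p ∈ S, ∀ q ∈ S, p ≠ q → max (ε p) (ε q) / 36 < dist p q)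
    (hmax : ∀ S' : Set X, S ⊆ S' → S' ⊆ M →
        (∀ p ∈ S', ∀ q ∈ S', p ≠ q → max (ε p) (ε q) / 36 < dist p q) → S' = S) :
    ∀ x ∈ M, ∃ p ∈ S, dist x p < ε p / 6 := by
  intro x hxM
  by_contra hcon
  push_neg at hcon
  -- x is not in S (else dist x x = 0 < ε x / 6)
  have hxS : x ∉ S := by
    intro hxS
    have := hcon x hxS
    have hp := (hpos x hxM).1
    simp at this
    linarith
  -- key: for any p ∈ S, separation holds between x and p
  have key : ∀ p ∈ S, max (ε x) (ε p) / 36 < dist x p := by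
    intro p hpS
    have hpM := hSM hpS
    have hεp := hpos p hpM
    have hεx := hpos x hxM
    have h6 : ε p / 6 ≤ dist x p := hcon p hpS
    have hx36 : ε x / 36 < dist x p := by
      by_contra h
      push_neg at h
      have h4 : dist x p ≤ ε x / 4 := by linarith
      have := hslow x hxM p hpM h4
      linarith
    have hp36 : ε p / 36 < dist x p := by linarith
    rcases max_cases (ε x) (ε p) with ⟨hm, _⟩ | ⟨hm, _⟩ <;> rw [hm] <;> assumption
  -- extend S by x, contradicting maximality
  have hsep' : ∀ p ∈ insert x S, ∀ q ∈ insert x S, p ≠ q →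
      max (ε p) (ε q) / 36 < dist p q := by
    intro p hp q hq hne
    rcases hp with rfl | hp
    · rcases hq with rfl | hq
      · exact absurd rfl hne
      · exact key q hq
    · rcases hq with rfl | hq
      · rw [max_comm, dist_comm]; exact key p hp
      · exact hsep p hp q hq hne
  have := hmax (insert x S) (Set.subset_insert x S)
    (Set.insert_subset hxM hSM) hsep'
  exact hxS (this ▸ Set.mem_insert x S)
end
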